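/- arXiv:2508.06489 — 4 statements merged into one kernel-verified Lean document; each statement's English description precedes it below -/
import Mathlib

section
/- Let 0 < α < 1/2, set a = α/(1−α) and b = a², and define ρ(α) = (ab + (a−b)(1+a)/2) / (ab + (a−b)(1+a)/2 + (1−a)(1 − (a+b)/2)). Then: ρ(α) < a for 0 < α < 1/3; ρ(α) = a for α = 1/3; and ρ(α) > a for 1/3 < α < 1/2. In particular, for 1/3 < α < 1/2 the limiting relative reward of the DAG withholding attack exceeds α/(1−α), the upper bound on the relative reward of selfish mining in Nakamoto consensus. -/
/-!
With `b = a²` the adversarial reward simplifies to `a (1 + a²) / 2` and the honest reward to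
`(1 - a)² (2 + a) / 2`, and then
`ρ - a = a (1 - a) (1 + a) (2a - 1) / (2 (adversarial + honest))`.
For `0 < a < 1` every factor except `2a - 1` is positive, and
`2a - 1 = (3α - 1) / (1 - α)` changes sign exactly at `α = 1/3`.
-/

noncomputable section

namespace DagWithholding

def adversarialReward (a b : ℝ) : ℝ := a * b + (a - b) * (1 + a) / 2

def honestReward (a b : ℝ) : ℝ := (1 - a) * (1 - (a + b) / 2)

def totalReward (a : ℝ) : ℝ := adversarialReward a (a ^ 2) + honestReward a (a ^ 2)

lemma adversarialReward_sq (a : ℝ) : adversarialReward a (a ^ 2) = a * (1 + a ^ 2) / 2 := by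
  unfold adversarialReward; ring

lemma honestReward_sq (a : ℝ) : honestReward a (a ^ 2) = (1 - a) ^ 2 * (2 + a) / 2 := by
  unfold honestReward; ring

lemma totalReward_pos {a : ℝ} (ha : 0 < a) : 0 < totalReward a := by
  have : -2 < a := by linarith
  rw [totalReward, adversarialReward_sq, honestReward_sq]
  positivity

lemma adversarialReward_div_totalReward_sub {a : ℝ} (ha : 0 < a) :
    adversarialReward a (a ^ 2) / totalReward a - a =
      a * (1 - a) * (1 + a) / (2 * totalReward a) * (2 * a - 1) := by
  have hT := (totalReward_pos ha).ne'
  field_simp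
  rw [totalReward, adversarialReward_sq, honestReward_sq]
  ring

lemma two_mul_div_one_sub_sub_one {α : ℝ} (hα : α ≠ 1) :
    2 * (α / (1 - α)) - 1 = (3 * α - 1) / (1 - α) := by
  rw [eq_div_iff (sub_ne_zero.mpr hα.symm)]
  field_simp
  ring

end DagWithholding

end

open DagWithholding in
/-- The limiting relative reward ρ(α) of the DAG withholding attack compared with
`a = α/(1−α)`: smaller for α < 1/3, equal at α = 1/3, larger for α > 1/3. -/
theorem stmt5 (α : ℝ) (hα0 : 0 < α) (hα1 : α < 1 / 2)
    (a b ρ : ℝ) (ha : a = α / (1 - α)) (hb : b = a ^ 2)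
    (hρ : ρ = (a * b + (a - b) * (1 + a) / 2) /
      (a * b + (a - b) * (1 + a) / 2 + (1 - a) * (1 - (a + b) / 2))) :
    (α < 1 / 3 → ρ < a) ∧ (α = 1 / 3 → ρ = a) ∧ (1 / 3 < α → ρ > a) := by
  have h1α : 0 < 1 - α := by linarith
  have ha0 : 0 < a := ha ▸ div_pos hα0 h1α
  have ha1 : a < 1 := by rw [ha, div_lt_one h1α]; linarith
  obtain ⟨k, hk, hsub⟩ : ∃ k > 0, ρ - a = k * (3 * α - 1) := by
    refine ⟨a * (1 - a) * (1 + a) / (2 * totalReward a) / (1 - α), ?_, ?_⟩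
    · have := totalReward_pos ha0
      have : 0 < 1 - a := by linarith
      positivity
    · rw [hρ, hb, ← adversarialReward, ← honestReward, ← totalReward, adversarialReward_div_totalReward_sub ha0,
        ha, two_mul_div_one_sub_sub_one (by linarith), ← ha]
      ring
  refine ⟨fun h => ?_, fun h => ?_, fun h => ?_⟩
  · exact sub_neg.mp (hsub ▸ mul_neg_of_pos_of_neg hk (by linarith))
  · rw [h] at hsub; linarith
  · exact sub_pos.mp (hsub ▸ mul_pos hk (by linarith))
end

section
/- Let L ≥ 1 and N ≥ 0 be integers and set M = L + N. Then ∫₀¹ L(1−x)^{L−1} · ( Σ_{k=1}^{M−1} k(1−x)^{k−1}x + M(1−x)^{M−1} ) dx = L·Σ_{k=1}^{M−1} k/((L+k)(L+k−1)) + L·M/(L+M−1), where the integral is the Lebesgue integral over the interval (0,1). (Note L·M/(L+M−1) = L(L+N)/(2L+N−1).) -/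
/-!
Every summand of the integrand is a constant times `(1 - x) ^ n` or `(1 - x) ^ n * x`, whose
integrals over `[0, 1]` are the Beta values `1 / (n + 1)` and `1 / ((n + 1) (n + 2))`; the
theorem is their linear combination.
-/

open MeasureTheory

theorem integral_one_sub_pow (n : ℕ) : ∫ x in (0 : ℝ)..1, (1 - x) ^ n = 1 / ((n : ℝ) + 1) := by
  simp [intervalIntegral.integral_comp_sub_left (fun u : ℝ => u ^ n)]

theorem integral_one_sub_pow_mul_self (n : ℕ) :
    ∫ x in (0 : ℝ)..1, (1 - x) ^ n * x = 1 / (((n : ℝ) + 1) * ((n : ℝ) + 2)) := by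
  have h := intervalIntegral.integral_comp_sub_left (fun u : ℝ => u ^ n * (1 - u))
    (a := 0) (b := 1) 1
  simp only [sub_self, sub_zero, sub_sub_cancel] at h
  simp_rw [h, mul_sub, mul_one, ← pow_succ]
  rw [intervalIntegral.integral_sub ((continuous_pow _).intervalIntegrable _ _)
    ((continuous_pow _).intervalIntegrable _ _), integral_pow, integral_pow]
  field_simp
  push_cast
  ring

/- Both sides vanish when `n = 0` or `m = 0`, so the truncated `n - 1`, `m - 1` do no harm. -/
theorem integral_mul_one_sub_pow_pred_mul_self (n m : ℕ) :
    ∫ x in (0 : ℝ)..1, n * (1 - x) ^ (n - 1) * (m * (1 - x) ^ (m - 1) * x)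
      = n * (m / ((n + m) * (n + m - 1))) := by
  rcases n with _ | n
  · simp
  rcases m with _ | m
  · simp
  have h : ∀ x : ℝ, ((n + 1 : ℕ) : ℝ) * (1 - x) ^ n * (((m + 1 : ℕ) : ℝ) * (1 - x) ^ m * x)
      = ((n + 1 : ℕ) : ℝ) * (m + 1 : ℕ) * ((1 - x) ^ (n + m) * x) := fun x => by ring
  simp only [Nat.add_sub_cancel, h, intervalIntegral.integral_const_mul,
    integral_one_sub_pow_mul_self]
  have hden : ((n + 1 : ℕ) : ℝ) + (m + 1 : ℕ) - 1 = n + m + 1 := by push_cast; ring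
  rw [hden]
  push_cast
  field_simp
  ring

theorem integral_mul_one_sub_pow_pred_mul (n m : ℕ) :
    ∫ x in (0 : ℝ)..1, n * (1 - x) ^ (n - 1) * (m * (1 - x) ^ (m - 1))
      = n * m / (n + m - 1) := by
  rcases n with _ | n
  · simp
  rcases m with _ | m
  · simp
  have h : ∀ x : ℝ, ((n + 1 : ℕ) : ℝ) * (1 - x) ^ n * (((m + 1 : ℕ) : ℝ) * (1 - x) ^ m)
      = ((n + 1 : ℕ) : ℝ) * (m + 1 : ℕ) * (1 - x) ^ (n + m) := fun x => by ring
  simp only [Nat.add_sub_cancel, h, intervalIntegral.integral_const_mul, integral_one_sub_pow]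
  have hden : ((n + 1 : ℕ) : ℝ) + (m + 1 : ℕ) - 1 = n + m + 1 := by push_cast; ring
  rw [hden]
  push_cast
  field_simp

theorem stmt10_general (L : ℕ) (M : ℕ) :
    ∫ x in Set.Ioo (0 : ℝ) 1, (L : ℝ) * (1 - x) ^ (L - 1) *
        ((∑ k ∈ Finset.Icc 1 (M - 1), (k : ℝ) * (1 - x) ^ (k - 1) * x)
          + (M : ℝ) * (1 - x) ^ (M - 1))
      = (L : ℝ) * (∑ k ∈ Finset.Icc 1 (M - 1), (k : ℝ) / (((L : ℝ) + k) * ((L : ℝ) + k - 1)))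
        + (L : ℝ) * M / ((L : ℝ) + M - 1) := by
  rw [← integral_Ioc_eq_integral_Ioo, ← intervalIntegral.integral_of_le zero_le_one]
  simp_rw [mul_add, Finset.mul_sum]
  rw [intervalIntegral.integral_add ((by fun_prop : Continuous _).intervalIntegrable _ _)
    ((by fun_prop : Continuous _).intervalIntegrable _ _),
    intervalIntegral.integral_finsetSum fun _ _ =>
      (by fun_prop : Continuous _).intervalIntegrable _ _]
  simp only [integral_mul_one_sub_pow_pred_mul_self, integral_mul_one_sub_pow_pred_mul]

/-- Unconditional expected honest waste in the practical DoS proof-withholding attack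
on Bobtail, where `M = L + N`. -/
theorem stmt10 (L N : ℕ) (hL : 1 ≤ L) (M : ℕ) (hM : M = L + N) :
    ∫ x in Set.Ioo (0 : ℝ) 1, (L : ℝ) * (1 - x) ^ (L - 1) *
        ((∑ k ∈ Finset.Icc 1 (M - 1), (k : ℝ) * (1 - x) ^ (k - 1) * x)
          + (M : ℝ) * (1 - x) ^ (M - 1))
      = (L : ℝ) * (∑ k ∈ Finset.Icc 1 (M - 1), (k : ℝ) / (((L : ℝ) + k) * ((L : ℝ) + k - 1)))
        + (L : ℝ) * M / ((L : ℝ) + M - 1) :=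
  stmt10_general L M
end

section
/- Let L ≥ 10 and N ≥ 0 be integers. Then L·Σ_{k=1}^{L+N−1} k/((L+k)(L+k−1)) + L(L+N)/(2L+N−1) > 2L/3. -/
/-!
With `g x = log x + L / x`, each summand `k / ((L + k) (L + k - 1))` dominates
`g (L + k) - g (L + k - 1)` because `log (x + 1) - log x ≤ 1 / x`, so the sum telescopes to at
least `g m - g L`, where `m = 2L + N - 1`. Adding the boundary term collapses everything to
`L (log (m / L) + 1 / m)`, and since `m ≥ 2L - 1` this is at least `L log 2 > 2L/3`.
-/

open Real Finset

lemma log_add_one_sub_log_le_inv {x : ℝ} (hx : 0 < x) : log (x + 1) - log x ≤ x⁻¹ := by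
  have h := log_le_sub_one_of_pos (show 0 < (x + 1) / x by positivity)
  rw [log_div (by positivity) hx.ne'] at h
  calc log (x + 1) - log x ≤ (x + 1) / x - 1 := h
    _ = x⁻¹ := by field_simp; ring

lemma log_add_div_increment_le (L : ℝ) {x : ℝ} (hx : 0 < x) :
    log (x + 1) + L / (x + 1) - (log x + L / x) ≤ (x + 1 - L) / ((x + 1) * x) := by
  have hsplit : (x + 1 - L) / ((x + 1) * x) - (L / (x + 1) - L / x) = x⁻¹ := by
    field_simp; ring
  linarith [log_add_one_sub_log_le_inv hx]

lemma log_add_div_sub_le_sum {L : ℝ} (hL : 0 < L) (M : ℕ) :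
    log (L + M) + L / (L + M) - (log L + 1) ≤
      ∑ k ∈ Icc 1 M, (k : ℝ) / ((L + k) * (L + k - 1)) := by
  induction M with
  | zero => simp [hL.ne']
  | succ M ih =>
    rw [sum_Icc_succ_top (by omega)]
    have hstep := log_add_div_increment_le L (show 0 < L + M by positivity)
    have hshape : (L + ((M + 1 : ℕ) : ℝ)) = (L + M) + 1 := by push_cast; ring
    rw [hshape, add_sub_cancel_right, show ((M + 1 : ℕ) : ℝ) = (L + M) + 1 - L by push_cast; ring]
    linarith

lemma log_two_le_log_div_add_inv {L m : ℝ} (hL : 0 < L) (hm : 0 < m) (hLm : 2 * L - 1 ≤ m) :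
    log 2 ≤ log (m / L) + m⁻¹ := by
  have h := log_le_sub_one_of_pos (show 0 < 2 * L / m by positivity)
  have hlog : log (2 * L / m) = log 2 - log (m / L) := by
    rw [← log_div (by positivity) (by positivity)]
    congr 1
    field_simp
  have hfrac : 2 * L / m - 1 ≤ m⁻¹ := by
    rw [div_sub_one hm.ne', inv_eq_one_div, div_le_div_iff_of_pos_right hm]
    linarith
  linarith

/-- For `L ≥ 10`, the expected honest waste exceeds `2L/3`. -/
theorem stmt11 (L N : ℕ) (hL : 10 ≤ L) :
    (L : ℝ) * (∑ k ∈ Finset.Icc 1 (L + N - 1), (k : ℝ) / (((L : ℝ) + k) * ((L : ℝ) + k - 1)))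
      + (L : ℝ) * ((L : ℝ) + N) / (2 * (L : ℝ) + N - 1) > 2 * (L : ℝ) / 3 := by
  have hL10 : (10 : ℝ) ≤ L := by exact_mod_cast hL
  have hL0 : (0 : ℝ) < L := by linarith
  set m : ℝ := 2 * L + N - 1
  have hLm : 2 * (L : ℝ) - 1 ≤ m := by linarith [(N.cast_nonneg : (0 : ℝ) ≤ N)]
  have hm0 : 0 < m := by linarith
  have hsum := log_add_div_sub_le_sum hL0 (L + N - 1)
  rw [Nat.cast_sub (by omega), show (L : ℝ) + ((L + N : ℕ) - (1 : ℕ) : ℝ) = m by push_cast; ring]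
    at hsum
  have hcollapse : (L : ℝ) * (log m + L / m - (log L + 1)) + L * (L + N) / m =
      L * (log (m / L) + m⁻¹) := by
    rw [log_div hm0.ne' hL0.ne']
    field_simp
    ring
  have hlog2 : (2 : ℝ) / 3 < log 2 := by linarith [log_two_gt_d9]
  calc 2 * (L : ℝ) / 3 < L * log 2 := by nlinarith
    _ ≤ L * (log (m / L) + m⁻¹) :=
      mul_le_mul_of_nonneg_left (log_two_le_log_div_add_inv hL0 hm0 hLm) hL0.le
    _ = L * (log m + L / m - (log L + 1)) + L * (L + N) / m := hcollapse.symm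
    _ ≤ _ := by gcongr
end

section
/- Let L ≥ 1 be an integer, let 0 < α < 1, 0 < r < 1, and let F_M > 0 and F_{M′} > 0 be real numbers. Then F_M·α·( r + (1−r)/L + ((1−r)/L)(L−1)α ) + F_{M′}·(1−α)·((1−r)/L)(L−1)α ≥ F_{M′}·(1−r)·α if and only if F_M / F_{M′} ≥ 1 − r/( r + ((1−r)/L)(1 + (L−1)α) ). -/
/-!
Write `K = r + (1 - r)/L * (1 + (L - 1) α)`. Since `(1 - r)/L * L = 1 - r`, the deviation's
surplus over the honest reward factors as `α (F_M K - F_{M'} (K - r))`. As `α > 0` and `K > 0`,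
the inequality is therefore equivalent to `F_M / F_{M'} ≥ (K - r)/K = 1 - r/K`.
-/

/-- The expected fraction of its own ledger's fees that the deviating miner collects, per unit of
hashpower: `r` as creator, plus `(1 - r)/L` for its own vote and for each of the other `L - 1`
votes, each of which it wins with probability `α`. -/
noncomputable def ownLedgerShare (L : ℕ) (α r : ℝ) : ℝ :=
  r + (1 - r) / L * (1 + ((L : ℝ) - 1) * α)

lemma ownLedgerShare_pos {L : ℕ} {α r : ℝ} (hL : 1 ≤ L) (hα : 0 ≤ α) (hr0 : 0 < r)
    (hr1 : r < 1) : 0 < ownLedgerShare L α r := by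
  have hL' : (1 : ℝ) ≤ L := by exact_mod_cast hL
  unfold ownLedgerShare
  have : 0 ≤ (1 - r) / L * (1 + ((L : ℝ) - 1) * α) := by
    apply mul_nonneg (div_nonneg (by linarith) (by linarith))
    nlinarith
  linarith

lemma deviation_sub_honest_eq {L : ℕ} (hL : L ≠ 0) (α r FM FM' : ℝ) :
    FM * α * (r + (1 - r) / L + (1 - r) / L * ((L : ℝ) - 1) * α)
        + FM' * (1 - α) * ((1 - r) / L * ((L : ℝ) - 1) * α) - FM' * (1 - r) * α
      = α * (FM * ownLedgerShare L α r - FM' * (ownLedgerShare L α r - r)) := by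
  have hL' : (L : ℝ) ≠ 0 := by exact_mod_cast hL
  unfold ownLedgerShare
  field_simp
  ring

lemma one_sub_div_le_div_iff {a b K r : ℝ} (hb : 0 < b) (hK : 0 < K) :
    1 - r / K ≤ a / b ↔ b * (K - r) ≤ a * K := by
  rw [one_sub_div hK.ne', div_le_div_iff₀ hK hb, mul_comm (K - r)]

theorem stmt13_general (L : ℕ) (hL : 1 ≤ L) (α r FM FM' : ℝ)
    (hα0 : 0 < α) (hr0 : 0 < r) (hr1 : r < 1)
    (hFM' : 0 < FM') :
    FM * α * (r + (1 - r) / L + (1 - r) / L * ((L : ℝ) - 1) * α)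
        + FM' * (1 - α) * ((1 - r) / L * ((L : ℝ) - 1) * α)
      ≥ FM' * (1 - r) * α
    ↔ FM / FM' ≥ 1 - r / (r + (1 - r) / L * (1 + ((L : ℝ) - 1) * α)) := by
  have hK := ownLedgerShare_pos hL hα0.le hr0 hr1
  rw [ge_iff_le, ge_iff_le, ← sub_nonneg, deviation_sub_honest_eq (by omega),
    mul_nonneg_iff_of_pos_left hα0, sub_nonneg, ← ownLedgerShare,
    one_sub_div_le_div_iff hFM' hK]

/-- Profitability condition for a miner to vote for its own ledger instead of the
ledger offering the most fees. -/
theorem stmt13 (L : ℕ) (hL : 1 ≤ L) (α r FM FM' : ℝ)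
    (hα0 : 0 < α) (hα1 : α < 1) (hr0 : 0 < r) (hr1 : r < 1)
    (hFM : 0 < FM) (hFM' : 0 < FM') :
    FM * α * (r + (1 - r) / L + (1 - r) / L * ((L : ℝ) - 1) * α)
        + FM' * (1 - α) * ((1 - r) / L * ((L : ℝ) - 1) * α)
      ≥ FM' * (1 - r) * α
    ↔ FM / FM' ≥ 1 - r / (r + (1 - r) / L * (1 + ((L : ℝ) - 1) * α)) :=
  stmt13_general L hL α r FM FM' hα0 hr0 hr1 hFM'
end
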